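/- Assume (GC), K continuous, and k(x,s) ≤ k(x+λ,s+λ) for λ ≥ 0. Then the equation u(x) = ∫₀ˣ k(x,s) g(u(s)) ds has at most one positive continuous solution: if u₁ and u₂ are both positive solutions on a common interval, then u₁ = u₂. -/

import Mathlib

open MeasureTheory Set Function

/-!
For `δ > 0` the shift `u (· + δ)` of a positive solution `u` is a strict supersolution. Splitting
`∫₀^{x+δ}` at `δ` and using `k x s ≤ k (x + δ) (s + δ)`, the defect `u (x + δ) - ∫₀ˣ k x s g (u (s + δ))`
is the integral of a nonnegative kernel against the positive weight `g ∘ u`; with weight `1` the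
same integral is `K (x + δ) - K x > 0`, so the defect is positive. The comparison principle then
puts every other solution below `u (· + δ)`; letting `δ → 0` gives one inequality, and symmetry
the other.
-/

theorem monotone_of_strictMonoOn_Ici_of_eq_zero {g : ℝ → ℝ} (hg_mono : StrictMonoOn g (Ici 0))
    (hg_zero : ∀ x ≤ (0:ℝ), g x = 0) : Monotone g :=
  MonotoneOn.Iic_union_Ici (fun a ha b hb _ => by rw [hg_zero a ha, hg_zero b hb])
    hg_mono.monotoneOn

theorem pos_of_strictMonoOn_Ici_of_map_zero {g : ℝ → ℝ} (hg_mono : StrictMonoOn g (Ici 0))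
    (hg0 : g 0 = 0) {t : ℝ} (ht : 0 < t) : 0 < g t :=
  hg0 ▸ hg_mono self_mem_Ici (mem_Ici.2 ht.le) ht

theorem le_of_le_volterra_of_volterra_lt {k : ℝ → ℝ → ℝ} {g u v : ℝ → ℝ} {M : ℝ}
    (hk_nonneg : ∀ x s, 0 ≤ k x s) (hk_int : ∀ x, IntervalIntegrable (k x) volume 0 x)
    (hg_mono : Monotone g) (hg_cont : Continuous g)
    (hu_cont : ContinuousOn u (Icc 0 M)) (hv_cont : ContinuousOn v (Icc 0 M))
    (hu : ∀ x ∈ Icc 0 M, u x ≤ ∫ s in (0:ℝ)..x, k x s * g (u s))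
    (hv : ∀ x ∈ Icc 0 M, ∫ s in (0:ℝ)..x, k x s * g (v s) < v x) :
    ∀ x ∈ Icc 0 M, u x ≤ v x := by
  by_contra! ⟨z, hz, hvz⟩
  set S := {x ∈ Icc 0 M | v x ≤ u x}
  have hS_bdd : BddBelow S := ⟨0, fun y hy => hy.1.1⟩
  have hx₀ : sInf S ∈ S :=
    (isClosed_Icc.isClosed_le hv_cont hu_cont).csInf_mem ⟨z, hz, hvz.le⟩ hS_bdd
  set x₀ := sInf S
  have hbelow : ∀ s ∈ Ico 0 x₀, u s < v s := fun s hs => not_le.1 fun h =>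
    hs.2.not_ge (csInf_le hS_bdd ⟨⟨hs.1, hs.2.le.trans hx₀.1.2⟩, h⟩)
  have hsub : uIcc 0 x₀ ⊆ Icc 0 M := by
    rw [uIcc_of_le hx₀.1.1]; exact Icc_subset_Icc_right hx₀.1.2
  have hmono : ∫ s in (0:ℝ)..x₀, k x₀ s * g (u s) ≤ ∫ s in (0:ℝ)..x₀, k x₀ s * g (v s) :=
    intervalIntegral.integral_mono_on_of_le_Ioo hx₀.1.1
      ((hk_int x₀).mul_continuousOn ((hg_cont.comp_continuousOn hu_cont).mono hsub))
      ((hk_int x₀).mul_continuousOn ((hg_cont.comp_continuousOn hv_cont).mono hsub))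
      fun s hs => mul_le_mul_of_nonneg_left (hg_mono (hbelow s ⟨hs.1.le, hs.2⟩).le) (hk_nonneg _ _)
  linarith [hu x₀ hx₀.1, hv x₀ hx₀.1, hx₀.2]

theorem integral_eq_integral_add_integral_comp_add_right {φ : ℝ → ℝ} {x δ : ℝ}
    (h₁ : IntervalIntegrable φ volume 0 δ) (h₂ : IntervalIntegrable φ volume δ (x + δ)) :
    ∫ t in (0:ℝ)..x + δ, φ t = (∫ t in (0:ℝ)..δ, φ t) + ∫ s in (0:ℝ)..x, φ (s + δ) := by
  rw [← intervalIntegral.integral_add_adjacent_intervals h₁ h₂,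
    intervalIntegral.integral_comp_add_right, zero_add]

theorem integral_mul_pos_of_integral_pos {f w : ℝ → ℝ} {a b : ℝ} (hab : a ≤ b)
    (hf_nonneg : ∀ t ∈ Ioc a b, 0 ≤ f t) (hf_int : IntervalIntegrable f volume a b)
    (hw_cont : ContinuousOn w (Icc a b)) (hw_pos : ∀ t ∈ Ioc a b, 0 < w t)
    (hf : 0 < ∫ t in a..b, f t) : 0 < ∫ t in a..b, f t * w t := by
  rw [← uIoc_of_le hab] at hf_nonneg hw_pos
  rw [← uIcc_of_le hab] at hw_cont
  rw [intervalIntegral.integral_pos_iff_support_of_nonneg_ae'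
    (ae_restrict_of_forall_mem measurableSet_uIoc hf_nonneg) hf_int] at hf
  rw [intervalIntegral.integral_pos_iff_support_of_nonneg_ae'
    (ae_restrict_of_forall_mem measurableSet_uIoc fun t ht =>
      mul_nonneg (hf_nonneg t ht) (hw_pos t ht).le) (hf_int.mul_continuousOn hw_cont)]
  have hsupp : support (fun t => f t * w t) ∩ Ioc a b = support f ∩ Ioc a b := by
    ext t
    simp only [mem_inter_iff, mem_support, mul_ne_zero_iff, and_congr_left_iff, and_iff_left_iff_imp]
    intro ht _
    exact (hw_pos t (uIoc_of_le hab ▸ ht)).ne'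
  rwa [hsupp]

theorem integral_comp_add_right_lt_integral {k : ℝ → ℝ → ℝ} {w : ℝ → ℝ} {x δ : ℝ}
    (hx : 0 ≤ x) (hδ : 0 ≤ δ) (hk_nonneg : ∀ t, 0 ≤ k (x + δ) t)
    (hk_int : ∀ x r, IntervalIntegrable (k x) volume 0 r)
    (hk_shift : ∀ s, k x s ≤ k (x + δ) (s + δ))
    (hK : ∫ s in (0:ℝ)..x, k x s < ∫ t in (0:ℝ)..x + δ, k (x + δ) t)
    (hw_cont : ContinuousOn w (Icc 0 (x + δ))) (hw_pos : ∀ t ∈ Ioc 0 (x + δ), 0 < w t) :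
    ∫ s in (0:ℝ)..x, k x s * w (s + δ) < ∫ t in (0:ℝ)..x + δ, k (x + δ) t * w t := by
  set y := x + δ
  have hk₁ : IntervalIntegrable (k y) volume 0 δ := hk_int y δ
  have hk₂ : IntervalIntegrable (k y) volume δ y := (hk_int y δ).symm.trans (hk_int y y)
  have hw₁ : ContinuousOn w (Icc 0 δ) := hw_cont.mono (Icc_subset_Icc_right (by linarith))
  have hw₂ : ContinuousOn w (uIcc δ y) := hw_cont.mono (by
    rw [uIcc_of_le (by linarith)]; exact Icc_subset_Icc_left hδ)
  have hks : IntervalIntegrable (fun s => k y (s + δ)) volume 0 x := by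
    simpa [y] using hk₂.comp_add_right δ
  have hws : ContinuousOn (fun s => w (s + δ)) (Icc 0 x) :=
    hw_cont.comp (continuous_add_const δ).continuousOn fun s hs =>
      ⟨by linarith [hs.1], by linarith [hs.2]⟩
  have hws' : ContinuousOn (fun s => w (s + δ)) (uIcc 0 x) := uIcc_of_le hx ▸ hws
  have hws_pos : ∀ s ∈ Ioc 0 x, 0 < w (s + δ) := fun s hs =>
    hw_pos _ ⟨by linarith [hs.1], by linarith [hs.2]⟩
  have hK_split := integral_eq_integral_add_integral_comp_add_right hk₁ hk₂
  have hw_split := integral_eq_integral_add_integral_comp_add_right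
    (hk₁.mul_continuousOn (uIcc_of_le hδ ▸ hw₁)) (hk₂.mul_continuousOn hw₂)
  have hK_sub := intervalIntegral.integral_sub hks (hk_int x x)
  have hw_sub : ∫ s in (0:ℝ)..x, (k y (s + δ) - k x s) * w (s + δ) =
      (∫ s in (0:ℝ)..x, k y (s + δ) * w (s + δ)) - ∫ s in (0:ℝ)..x, k x s * w (s + δ) := by
    simp_rw [sub_mul]
    exact intervalIntegral.integral_sub (hks.mul_continuousOn hws')
      ((hk_int x x).mul_continuousOn hws')
  have hA_nonneg : 0 ≤ ∫ t in (0:ℝ)..δ, k y t * w t := by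
    rw [intervalIntegral.integral_of_le hδ]
    exact setIntegral_nonneg measurableSet_Ioc fun t ht =>
      mul_nonneg (hk_nonneg t) (hw_pos t ⟨ht.1, by linarith [ht.2]⟩).le
  have hB_nonneg : 0 ≤ ∫ s in (0:ℝ)..x, (k y (s + δ) - k x s) * w (s + δ) := by
    rw [intervalIntegral.integral_of_le hx]
    exact setIntegral_nonneg measurableSet_Ioc fun s hs =>
      mul_nonneg (sub_nonneg.2 (hk_shift s)) (hws_pos s hs).le
  -- `K (x + δ) - K x` splits into the same two integrals, with weight `1`
  obtain hA | hB : 0 < ∫ t in (0:ℝ)..δ, k y t ∨ 0 < ∫ s in (0:ℝ)..x, (k y (s + δ) - k x s) := by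
    by_contra! h
    linarith
  · have := integral_mul_pos_of_integral_pos hδ (fun t _ => hk_nonneg t) hk₁ hw₁
      (fun t ht => hw_pos t ⟨ht.1, by linarith [ht.2]⟩) hA
    linarith
  · have := integral_mul_pos_of_integral_pos hx (fun s _ => sub_nonneg.2 (hk_shift s))
      (hks.sub (hk_int x x)) hws hws_pos hB
    linarith

theorem solution_le_of_pos_solution {k : ℝ → ℝ → ℝ} {g u v : ℝ → ℝ} {L : ℝ}
    (hk_nonneg : ∀ x s, 0 ≤ k x s)
    (hk_int : ∀ x r, IntervalIntegrable (fun s => k x s) volume 0 r)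
    (hK_mono : StrictMonoOn (fun x => ∫ s in (0:ℝ)..x, k x s) (Ici 0))
    (hk_trans : ∀ x s l : ℝ, 0 ≤ l → k x s ≤ k (x + l) (s + l))
    (hg_cont : Continuous g) (hg_mono : StrictMonoOn g (Ici 0)) (hg_zero : ∀ x ≤ (0:ℝ), g x = 0)
    (hL : 0 < L)
    (hu_cont : ContinuousOn u (Icc 0 L)) (hu_pos : ∀ x ∈ Ioc (0:ℝ) L, 0 < u x)
    (hu_sol : ∀ x ∈ Icc (0:ℝ) L, u x = ∫ s in (0:ℝ)..x, k x s * g (u s))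
    (hv_cont : ContinuousOn v (Icc 0 L))
    (hv_sol : ∀ x ∈ Icc (0:ℝ) L, v x = ∫ s in (0:ℝ)..x, k x s * g (v s)) :
    ∀ x ∈ Icc 0 L, v x ≤ u x := by
  have hv_le_shift : ∀ δ > 0, ∀ x ∈ Icc 0 (L - δ), v x ≤ u (x + δ) := by
    intro δ hδ
    have hsub : Icc 0 (L - δ) ⊆ Icc 0 L := Icc_subset_Icc_right (by linarith)
    have hmaps : MapsTo (· + δ) (Icc 0 (L - δ)) (Icc 0 L) := fun s hs =>
      ⟨by linarith [hs.1], by linarith [hs.2]⟩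
    refine le_of_le_volterra_of_volterra_lt hk_nonneg (fun x => hk_int x x)
      (monotone_of_strictMonoOn_Ici_of_eq_zero hg_mono hg_zero) hg_cont (hv_cont.mono hsub)
      (hu_cont.comp (continuous_add_const δ).continuousOn hmaps)
      (fun x hx => (hv_sol x (hsub hx)).le) fun x hx => ?_
    rw [hu_sol (x + δ) (hmaps hx)]
    exact integral_comp_add_right_lt_integral hx.1 hδ.le (hk_nonneg _) hk_int
      (fun s => hk_trans x s δ hδ.le) (hK_mono hx.1 (mem_Ici.2 (by linarith [hx.1]))
      (by linarith))
      (hg_cont.comp_continuousOn (hu_cont.mono (Icc_subset_Icc_right (hmaps hx).2)))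
      fun t ht => pos_of_strictMonoOn_Ici_of_map_zero hg_mono (hg_zero 0 le_rfl)
        (hu_pos t ⟨ht.1, ht.2.trans (hmaps hx).2⟩)
  have hv_le_Ico : ∀ x ∈ Ico 0 L, v x ≤ u x := by
    intro x hx
    have hclosure : closure (Ioc x L) = Icc x L := closure_Ioc hx.2.ne
    refine le_on_closure (f := fun _ => v x) (fun y hy => ?_) continuousOn_const
      (hclosure ▸ hu_cont.mono (Icc_subset_Icc_left hx.1)) (hclosure ▸ left_mem_Icc.2 hx.2.le)
    simpa using hv_le_shift (y - x) (sub_pos.2 hy.1) x ⟨hx.1, by linarith [hy.2]⟩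
  intro x hx
  refine le_on_closure hv_le_Ico ?_ ?_ (closure_Ico hL.ne ▸ hx) <;> rwa [closure_Ico hL.ne]

theorem uniqueness_of_positive_solution_general
    (k : ℝ → ℝ → ℝ) (g u₁ u₂ : ℝ → ℝ) (L : ℝ)
    (hk_nonneg : ∀ x s, 0 ≤ k x s)
    (hk_int : ∀ x r, IntervalIntegrable (fun s => k x s) volume 0 r)
    (hK_mono : StrictMonoOn (fun x => ∫ s in (0:ℝ)..x, k x s) (Set.Ici 0))
    (hk_trans : ∀ x s l : ℝ, 0 ≤ l → k x s ≤ k (x + l) (s + l))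
    (hg_cont : Continuous g)
    (hg_mono : StrictMonoOn g (Set.Ici 0))
    (hg_zero : ∀ x ≤ (0:ℝ), g x = 0)
    (hL : 0 < L)
    (hu₁_cont : ContinuousOn u₁ (Set.Icc 0 L))
    (hu₁_pos : ∀ x ∈ Set.Ioc (0:ℝ) L, 0 < u₁ x)
    (hu₁_sol : ∀ x ∈ Set.Icc (0:ℝ) L, u₁ x = ∫ s in (0:ℝ)..x, k x s * g (u₁ s))
    (hu₂_cont : ContinuousOn u₂ (Set.Icc 0 L))
    (hu₂_pos : ∀ x ∈ Set.Ioc (0:ℝ) L, 0 < u₂ x)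
    (hu₂_sol : ∀ x ∈ Set.Icc (0:ℝ) L, u₂ x = ∫ s in (0:ℝ)..x, k x s * g (u₂ s)) :
    ∀ x ∈ Set.Icc (0:ℝ) L, u₁ x = u₂ x := fun x hx =>
  le_antisymm
    (solution_le_of_pos_solution hk_nonneg hk_int hK_mono hk_trans hg_cont hg_mono hg_zero hL
      hu₂_cont hu₂_pos hu₂_sol hu₁_cont hu₁_sol x hx)
    (solution_le_of_pos_solution hk_nonneg hk_int hK_mono hk_trans hg_cont hg_mono hg_zero hL
      hu₁_cont hu₁_pos hu₁_sol hu₂_cont hu₂_sol x hx)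

theorem uniqueness_of_positive_solution
    (k : ℝ → ℝ → ℝ) (g u₁ u₂ : ℝ → ℝ) (L : ℝ)
    (hk_nonneg : ∀ x s, 0 ≤ k x s)
    (hk_zero : ∀ x s, x < s → k x s = 0)
    (hk_bdd : ∀ r > (0:ℝ), ∃ C, ∀ x ∈ Set.Icc (-r) r, ∀ s ∈ Set.Icc (-r) r, k x s ≤ C)
    (hk_int : ∀ x r, IntervalIntegrable (fun s => k x s) volume 0 r)
    (hK_mono : StrictMonoOn (fun x => ∫ s in (0:ℝ)..x, k x s) (Set.Ici 0))
    (hK_cont : Continuous (fun x => ∫ s in (0:ℝ)..x, k x s))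
    (hk_trans : ∀ x s l : ℝ, 0 ≤ l → k x s ≤ k (x + l) (s + l))
    (hg_cont : Continuous g)
    (hg_mono : StrictMonoOn g (Set.Ici 0))
    (hg_zero : ∀ x ≤ (0:ℝ), g x = 0)
    (hL : 0 < L)
    (hu₁_cont : ContinuousOn u₁ (Set.Icc 0 L))
    (hu₁_pos : ∀ x ∈ Set.Ioc (0:ℝ) L, 0 < u₁ x)
    (hu₁_sol : ∀ x ∈ Set.Icc (0:ℝ) L, u₁ x = ∫ s in (0:ℝ)..x, k x s * g (u₁ s))
    (hu₂_cont : ContinuousOn u₂ (Set.Icc 0 L))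
    (hu₂_pos : ∀ x ∈ Set.Ioc (0:ℝ) L, 0 < u₂ x)
    (hu₂_sol : ∀ x ∈ Set.Icc (0:ℝ) L, u₂ x = ∫ s in (0:ℝ)..x, k x s * g (u₂ s)) :
    ∀ x ∈ Set.Icc (0:ℝ) L, u₁ x = u₂ x :=
  uniqueness_of_positive_solution_general k g u₁ u₂ L hk_nonneg hk_int hK_mono hk_trans hg_cont
    hg_mono hg_zero hL hu₁_cont hu₁_pos hu₁_sol hu₂_cont hu₂_pos hu₂_sol
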